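/- If X is a sum of three independent random variables each having density with Fisher information at most I, then the density p of X satisfies |p''(x)| ≤ I^{5/4} √(p(x)) for all x. -/

import Mathlib

open MeasureTheory Real

/-!
Write `hᵢ = pᵢ' ^ 2 / pᵢ`, so that `|pᵢ'| = √hᵢ · √pᵢ` and `∫ hᵢ ≤ I`. A density is bounded by
its total variation, hence by Cauchy–Schwarz `p₃ ≤ ∫ |p₃'| ≤ √(∫ h₃) · √(∫ p₃) ≤ √I`.
Cauchy–Schwarz in the convolution integral gives `|r'| ≤ √(h₂ ⋆ p₃) · √r`, and once more
`|p''(x)| ≤ √((h₁ ⋆ h₂ ⋆ p₃)(x)) · √(p(x))`, where `h₁ ⋆ h₂ ⋆ p₃ ≤ I · I · √I = I ^ (5/2)`.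
-/

lemma abs_eq_sqrt_sq_div_mul_sqrt {a b : ℝ} (hb : 0 ≤ b) (hab : b = 0 → a = 0) :
    |a| = √(a ^ 2 / b) * √b := by
  rcases hb.eq_or_lt with hb | hb
  · simp [hab hb.symm, ← hb]
  · rw [← sqrt_mul (div_nonneg (sq_nonneg a) hb.le), div_mul_cancel₀ _ hb.ne', sqrt_sq_eq_abs]

lemma abs_mul_le_sqrt_mul_mul_sqrt_mul {a b A B C D : ℝ} (hA : 0 ≤ A) (hB : 0 ≤ B)
    (ha : |a| ≤ √A * √B) (hb : |b| ≤ √C * √D) : |a * b| ≤ √(A * C) * √(B * D) := by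
  rw [abs_mul, sqrt_mul hA, sqrt_mul hB]
  calc |a| * |b| ≤ (√A * √B) * (√C * √D) :=
        mul_le_mul ha hb (abs_nonneg b) (by positivity)
    _ = _ := by ring

section CauchySchwarz

variable {α : Type*} [MeasurableSpace α] {μ : Measure α} {F G : α → ℝ}

lemma memLp_two_sqrt (hF0 : ∀ x, 0 ≤ F x) (hF : Integrable F μ) :
    MemLp (fun x => √(F x)) 2 μ :=
  (memLp_two_iff_integrable_sq (continuous_sqrt.comp_aestronglyMeasurable
    hF.aestronglyMeasurable)).2 (hF.congr (.of_forall fun x => (sq_sqrt (hF0 x)).symm))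

lemma integrable_sqrt_mul_sqrt (hF0 : ∀ x, 0 ≤ F x) (hG0 : ∀ x, 0 ≤ G x)
    (hF : Integrable F μ) (hG : Integrable G μ) :
    Integrable (fun x => √(F x) * √(G x)) μ :=
  (memLp_two_sqrt hF0 hF).integrable_mul (memLp_two_sqrt hG0 hG)

lemma integral_sqrt_mul_sqrt_le (hF0 : ∀ x, 0 ≤ F x) (hG0 : ∀ x, 0 ≤ G x)
    (hF : Integrable F μ) (hG : Integrable G μ) :
    ∫ x, √(F x) * √(G x) ∂μ ≤ √(∫ x, F x ∂μ) * √(∫ x, G x ∂μ) := by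
  have h := integral_mul_le_Lp_mul_Lq_of_nonneg (μ := μ) Real.HolderConjugate.two_two
    (.of_forall fun x => sqrt_nonneg (F x)) (.of_forall fun x => sqrt_nonneg (G x))
    (by simpa using memLp_two_sqrt hF0 hF) (by simpa using memLp_two_sqrt hG0 hG)
  simp only [rpow_two, sq_sqrt (hF0 _), sq_sqrt (hG0 _), ← sqrt_eq_rpow] at h
  exact h

lemma abs_integral_le_sqrt_mul_sqrt {u : α → ℝ} (hF0 : ∀ x, 0 ≤ F x) (hG0 : ∀ x, 0 ≤ G x)
    (hF : Integrable F μ) (hG : Integrable G μ) (hu : ∀ x, |u x| ≤ √(F x) * √(G x)) :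
    |∫ x, u x ∂μ| ≤ √(∫ x, F x ∂μ) * √(∫ x, G x ∂μ) :=
  calc |∫ x, u x ∂μ| ≤ ∫ x, |u x| ∂μ := abs_integral_le_integral_abs
    _ ≤ ∫ x, √(F x) * √(G x) ∂μ :=
      integral_mono_of_nonneg (.of_forall fun _ => abs_nonneg _)
        (integrable_sqrt_mul_sqrt hF0 hG0 hF hG) (.of_forall hu)
    _ ≤ _ := integral_sqrt_mul_sqrt_le hF0 hG0 hF hG

lemma abs_integral_mul_le_sqrt_mul_sqrt {a b u G R : α → ℝ} (hb : ∀ x, 0 ≤ b x)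
    (hab : ∀ x, b x = 0 → a x = 0) (hG : ∀ x, 0 ≤ G x) (hR : ∀ x, 0 ≤ R x)
    (hu : ∀ x, |u x| ≤ √(G x) * √(R x))
    (haG : Integrable (fun x => a x ^ 2 / b x * G x) μ) (hbR : Integrable (fun x => b x * R x) μ) :
    |∫ x, a x * u x ∂μ| ≤ √(∫ x, a x ^ 2 / b x * G x ∂μ) * √(∫ x, b x * R x ∂μ) :=
  abs_integral_le_sqrt_mul_sqrt
    (fun x => mul_nonneg (div_nonneg (sq_nonneg _) (hb x)) (hG x))
    (fun x => mul_nonneg (hb x) (hR x)) haG hbR fun x =>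
      abs_mul_le_sqrt_mul_mul_sqrt_mul (div_nonneg (sq_nonneg _) (hb x)) (hb x)
        (abs_eq_sqrt_sq_div_mul_sqrt (hb x) (hab x)).le (hu x)

end CauchySchwarz

lemma exists_norm_lt_of_integrableOn {α E : Type*} [MeasurableSpace α] {μ : Measure α}
    [NormedAddCommGroup E] {f : α → E} {s : Set α} (hf : IntegrableOn f s μ)
    (hs_meas : MeasurableSet s) (hs : μ s = ⊤) {ε : ℝ} (hε : 0 < ε) : ∃ x ∈ s, ‖f x‖ < ε := by
  by_contra! h
  have hε_int : IntegrableOn (fun _ => ε) s μ :=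
    Integrable.mono' (g := fun x => ‖f x‖) hf.norm aestronglyMeasurable_const <|
      ae_restrict_of_forall_mem hs_meas fun x hx => by simpa [abs_of_pos hε] using h x hx
  rcases (integrableOn_const_iff).1 hε_int with h0 | hlt
  · simp [hε.ne'] at h0
  · exact hlt.ne hs

lemma le_integral_abs_of_sub_eq_intervalIntegral {q q' : ℝ → ℝ} (hq : Integrable q)
    (hq' : Integrable (fun x => |q' x|))
    (hFTC : ∀ a b : ℝ, q b - q a = ∫ x in a..b, q' x) (b : ℝ) : q b ≤ ∫ x, |q' x| := by
  refine le_of_forall_pos_le_add fun ε hε => ?_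
  obtain ⟨a, hab, hqa⟩ :=
    exists_norm_lt_of_integrableOn hq.integrableOn measurableSet_Iic (volume_Iic (a := b)) hε
  have hvar : q b - q a ≤ ∫ x, |q' x| := by
    rw [hFTC, intervalIntegral.integral_of_le hab]
    calc ∫ x in Set.Ioc a b, q' x ≤ ∫ x in Set.Ioc a b, |q' x| :=
          le_trans (le_abs_self _) abs_integral_le_integral_abs
      _ ≤ ∫ x, |q' x| := setIntegral_le_integral hq' (.of_forall fun _ => abs_nonneg _)
  linarith [le_abs_self (q a), (norm_eq_abs (q a)) ▸ hqa]

section Fisher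

variable {q q' : ℝ → ℝ}

-- Off `{0 < q}` we have `q = 0`, so the integrand is `q' ^ 2 / 0 = 0`.
lemma fisher_eq_zero_of_not_pos (hq : ∀ x, 0 ≤ q x) {x : ℝ} (hx : x ∉ {x | 0 < q x}) :
    q' x ^ 2 / q x = 0 := by
  rw [le_antisymm (not_lt.1 hx) (hq x), div_zero]

lemma integrable_fisher (hq : ∀ x, 0 ≤ q x)
    (hfin : IntegrableOn (fun x => q' x ^ 2 / q x) {x | 0 < q x}) :
    Integrable (fun x => q' x ^ 2 / q x) :=
  (integrableOn_iff_integrable_of_support_subset fun _ hx =>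
    by_contra fun h => hx (fisher_eq_zero_of_not_pos hq h)).1 hfin

lemma setIntegral_pos_fisher_eq (hq : ∀ x, 0 ≤ q x) :
    ∫ x in {x | 0 < q x}, q' x ^ 2 / q x = ∫ x, q' x ^ 2 / q x :=
  setIntegral_eq_integral_of_forall_compl_eq_zero fun _ => fisher_eq_zero_of_not_pos hq

lemma le_sqrt_of_fisher_le {I : ℝ} (hq : ∀ x, 0 ≤ q x) (hq_int : Integrable q)
    (hq1 : ∫ x, q x = 1) (hFTC : ∀ a b : ℝ, q b - q a = ∫ x in a..b, q' x)
    (hq' : ∀ x, q x = 0 → q' x = 0) (hfin : Integrable (fun x => q' x ^ 2 / q x))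
    (hI : ∫ x, q' x ^ 2 / q x ≤ I) (b : ℝ) : q b ≤ √I := by
  have hfisher0 : ∀ x, 0 ≤ q' x ^ 2 / q x := fun x => div_nonneg (sq_nonneg _) (hq x)
  have habs : (fun x => |q' x|) = fun x => √(q' x ^ 2 / q x) * √(q x) :=
    funext fun x => abs_eq_sqrt_sq_div_mul_sqrt (hq x) (hq' x)
  calc q b ≤ ∫ x, |q' x| :=
        le_integral_abs_of_sub_eq_intervalIntegral hq_int
          (habs ▸ integrable_sqrt_mul_sqrt hfisher0 hq hfin hq_int) hFTC b
    _ ≤ √(∫ x, q' x ^ 2 / q x) * √(∫ x, q x) :=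
        habs ▸ integral_sqrt_mul_sqrt_le hfisher0 hq hfin hq_int
    _ ≤ √I := by rw [hq1, sqrt_one, mul_one]; exact sqrt_le_sqrt hI

end Fisher

section Convolution

variable {f g : ℝ → ℝ}

lemma integrable_integral_comp_sub_mul (hf : Integrable f) (hg : Integrable g) :
    Integrable (fun x => ∫ z, f (x - z) * g z) := by
  have : (fun x => ∫ z, f (x - z) * g z) = convolution g f (ContinuousLinearMap.mul ℝ ℝ) := by
    ext x
    simp [convolution_def, mul_comm]
  exact this ▸ hg.integrable_convolution _ hf

lemma integrable_comp_sub_mul (hf : Integrable f) (hg : AEStronglyMeasurable g) {C : ℝ}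
    (hgC : ∀ z, |g z| ≤ C) (x : ℝ) : Integrable (fun z => f (x - z) * g z) :=
  (hf.comp_sub_left x).mul_bdd hg (.of_forall hgC)

lemma abs_integral_comp_sub_mul_le (hf0 : ∀ z, 0 ≤ f z) (hf : Integrable f) {C : ℝ}
    (hgC : ∀ z, |g z| ≤ C) (x : ℝ) : |∫ z, f (x - z) * g z| ≤ C * ∫ z, f z :=
  calc |∫ z, f (x - z) * g z| ≤ ∫ z, |f (x - z) * g z| := abs_integral_le_integral_abs
    _ ≤ ∫ z, C * f (x - z) :=
      integral_mono_of_nonneg (.of_forall fun _ => abs_nonneg _)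
        ((hf.comp_sub_left x).const_mul C) <| .of_forall fun z => by
          dsimp only
          rw [abs_mul, abs_of_nonneg (hf0 _), mul_comm]
          exact mul_le_mul_of_nonneg_right (hgC z) (hf0 _)
    _ = C * ∫ z, f z := by rw [integral_const_mul, integral_sub_left_eq_self f volume x]

end Convolution

lemma abs_integral_comp_sub_mul_le_sqrt_mul_sqrt {q q' u G R : ℝ → ℝ} (hq : ∀ x, 0 ≤ q x)
    (hq' : ∀ x, q x = 0 → q' x = 0) (hq_int : Integrable q)
    (hfisher : Integrable (fun x => q' x ^ 2 / q x))
    (hG : ∀ y, 0 ≤ G y) (hGm : AEStronglyMeasurable G) {CG : ℝ} (hGC : ∀ y, |G y| ≤ CG)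
    (hR : ∀ y, 0 ≤ R y) (hRm : AEStronglyMeasurable R) {CR : ℝ} (hRC : ∀ y, |R y| ≤ CR)
    (hu : ∀ y, |u y| ≤ √(G y) * √(R y)) (x : ℝ) :
    |∫ y, q' (x - y) * u y| ≤
      √(∫ y, q' (x - y) ^ 2 / q (x - y) * G y) * √(∫ y, q (x - y) * R y) :=
  abs_integral_mul_le_sqrt_mul_sqrt (a := fun y => q' (x - y)) (b := fun y => q (x - y))
    (fun _ => hq _) (fun _ => hq' _) hG hR hu (integrable_comp_sub_mul hfisher hGm hGC x)
    (integrable_comp_sub_mul hq_int hRm hRC x)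

lemma sqrt_sqrt_mul_mul_self_eq_rpow {I : ℝ} (hI : 0 ≤ I) :
    √(√I * I * I) = I ^ ((5 : ℝ) / 4) := by
  have h : √I * I * I = I ^ ((1 / 2 + 1 + 1 : ℝ)) := by
    rw [sqrt_eq_rpow, rpow_add_one' hI (by norm_num), rpow_add_one' hI (by norm_num)]
  rw [h, sqrt_eq_rpow, ← rpow_mul hI]
  norm_num

theorem convolution_three_second_deriv_bound_general
    (p₁ p₂ p₃ p₁' p₂' p₃' : ℝ → ℝ) (I : ℝ)
    (hnn₁ : ∀ x, 0 ≤ p₁ x) (hint₁ : Integrable p₁)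
    (hnn₂ : ∀ x, 0 ≤ p₂ x) (hint₂ : Integrable p₂)
    (hnn₃ : ∀ x, 0 ≤ p₃ x) (hint₃ : Integrable p₃) (h1₃ : ∫ x, p₃ x = 1)
    (hFTC₃ : ∀ a b : ℝ, p₃ b - p₃ a = ∫ x in a..b, p₃' x)
    (hconv₁ : ∀ x, p₁ x = 0 → p₁' x = 0)
    (hconv₂ : ∀ x, p₂ x = 0 → p₂' x = 0)
    (hconv₃ : ∀ x, p₃ x = 0 → p₃' x = 0)
    (hI₁fin : IntegrableOn (fun x => (p₁' x) ^ 2 / p₁ x) {x | 0 < p₁ x})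
    (hI₂fin : IntegrableOn (fun x => (p₂' x) ^ 2 / p₂ x) {x | 0 < p₂ x})
    (hI₃fin : IntegrableOn (fun x => (p₃' x) ^ 2 / p₃ x) {x | 0 < p₃ x})
    (hI₁ : ∫ x in {x | 0 < p₁ x}, (p₁' x) ^ 2 / p₁ x ≤ I)
    (hI₂ : ∫ x in {x | 0 < p₂ x}, (p₂' x) ^ 2 / p₂ x ≤ I)
    (hI₃ : ∫ x in {x | 0 < p₃ x}, (p₃' x) ^ 2 / p₃ x ≤ I)
    (r r' p p'' : ℝ → ℝ)
    (hr : ∀ x, r x = ∫ z, p₂ (x - z) * p₃ z)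
    (hr' : ∀ x, r' x = ∫ z, p₂' (x - z) * p₃ z)
    (hp : ∀ x, p x = ∫ y, p₁ (x - y) * r y)
    (hp'' : ∀ x, p'' x = ∫ y, p₁' (x - y) * r' y) :
    ∀ x, |p'' x| ≤ I ^ ((5 : ℝ) / 4) * Real.sqrt (p x) := by
  intro x
  have hI0 : 0 ≤ I := (integral_nonneg fun u => div_nonneg (sq_nonneg _) (hnn₁ u)).trans hI₁
  rw [setIntegral_pos_fisher_eq hnn₁] at hI₁
  rw [setIntegral_pos_fisher_eq hnn₂] at hI₂
  rw [setIntegral_pos_fisher_eq hnn₃] at hI₃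
  have hh₁ := integrable_fisher hnn₁ hI₁fin
  have hh₂ := integrable_fisher hnn₂ hI₂fin
  have hp₃_le : ∀ z, |p₃ z| ≤ √I := fun z => (abs_of_nonneg (hnn₃ z)).trans_le <|
    le_sqrt_of_fisher_le hnn₃ hint₃ h1₃ hFTC₃ hconv₃ (integrable_fisher hnn₃ hI₃fin) hI₃ z
  set g := fun y => ∫ z, p₂' (y - z) ^ 2 / p₂ (y - z) * p₃ z
  have hg0 : ∀ y, 0 ≤ g y := fun y =>
    integral_nonneg fun z => mul_nonneg (div_nonneg (sq_nonneg _) (hnn₂ _)) (hnn₃ z)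
  have hg_le : ∀ y, |g y| ≤ √I * I := fun y =>
    (abs_integral_comp_sub_mul_le (fun _ => div_nonneg (sq_nonneg _) (hnn₂ _)) hh₂ hp₃_le y).trans
      (mul_le_mul_of_nonneg_left hI₂ (sqrt_nonneg I))
  have hr0 : ∀ y, 0 ≤ r y := fun y => by
    rw [hr]; exact integral_nonneg fun z => mul_nonneg (hnn₂ _) (hnn₃ z)
  have hr_le : ∀ y, |r y| ≤ √I * ∫ z, p₂ z := fun y => by
    rw [hr]; exact abs_integral_comp_sub_mul_le hnn₂ hint₂ hp₃_le y
  have hrm : AEStronglyMeasurable r :=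
    ((integrable_integral_comp_sub_mul hint₂ hint₃).congr
      (.of_forall fun y => (hr y).symm)).aestronglyMeasurable
  have hr'_le : ∀ y, |r' y| ≤ √(g y) * √(r y) := fun y => by
    rw [hr', hr]
    exact abs_integral_comp_sub_mul_le_sqrt_mul_sqrt hnn₂ hconv₂ hint₂ hh₂
      hnn₃ hint₃.aestronglyMeasurable hp₃_le hnn₃ hint₃.aestronglyMeasurable hp₃_le
      (fun z => by rw [mul_self_sqrt (hnn₃ z), abs_of_nonneg (hnn₃ z)]) y
  have hfisher_le : ∫ y, p₁' (x - y) ^ 2 / p₁ (x - y) * g y ≤ √I * I * I :=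
    (le_abs_self _).trans <|
      (abs_integral_comp_sub_mul_le (fun _ => div_nonneg (sq_nonneg _) (hnn₁ _)) hh₁ hg_le x).trans
        (mul_le_mul_of_nonneg_left hI₁ (by positivity))
  calc |p'' x| ≤ √(∫ y, p₁' (x - y) ^ 2 / p₁ (x - y) * g y) * √(p x) := by
        rw [hp'', hp]
        exact abs_integral_comp_sub_mul_le_sqrt_mul_sqrt hnn₁ hconv₁ hint₁ hh₁
          hg0 (integrable_integral_comp_sub_mul hh₂ hint₃).aestronglyMeasurable hg_le
          hr0 hrm hr_le hr'_le x
    _ ≤ √(√I * I * I) * √(p x) := by gcongr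
    _ = I ^ ((5 : ℝ) / 4) * √(p x) := by rw [sqrt_sqrt_mul_mul_self_eq_rpow hI0]

/-- If `X = X₁ + X₂ + X₃` with independent summands whose densities `p₁, p₂, p₃` have
Fisher information at most `I`, then the density `p = p₁ ⋆ p₂ ⋆ p₃` of `X` satisfies
`|p''(x)| ≤ I^{5/4} √(p(x))` for all `x`. Here `r = p₂ ⋆ p₃`, `r' = p₂' ⋆ p₃` and
`p'' = p₁' ⋆ r'`. -/
theorem convolution_three_second_deriv_bound
    (p₁ p₂ p₃ p₁' p₂' p₃' : ℝ → ℝ) (I : ℝ)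
    (hnn₁ : ∀ x, 0 ≤ p₁ x) (hint₁ : Integrable p₁) (h1₁ : ∫ x, p₁ x = 1)
    (hnn₂ : ∀ x, 0 ≤ p₂ x) (hint₂ : Integrable p₂) (h1₂ : ∫ x, p₂ x = 1)
    (hnn₃ : ∀ x, 0 ≤ p₃ x) (hint₃ : Integrable p₃) (h1₃ : ∫ x, p₃ x = 1)
    (hFTC₁ : ∀ a b : ℝ, p₁ b - p₁ a = ∫ x in a..b, p₁' x)
    (hFTC₂ : ∀ a b : ℝ, p₂ b - p₂ a = ∫ x in a..b, p₂' x)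
    (hFTC₃ : ∀ a b : ℝ, p₃ b - p₃ a = ∫ x in a..b, p₃' x)
    (hconv₁ : ∀ x, p₁ x = 0 → p₁' x = 0)
    (hconv₂ : ∀ x, p₂ x = 0 → p₂' x = 0)
    (hconv₃ : ∀ x, p₃ x = 0 → p₃' x = 0)
    (hI₁fin : IntegrableOn (fun x => (p₁' x) ^ 2 / p₁ x) {x | 0 < p₁ x})
    (hI₂fin : IntegrableOn (fun x => (p₂' x) ^ 2 / p₂ x) {x | 0 < p₂ x})
    (hI₃fin : IntegrableOn (fun x => (p₃' x) ^ 2 / p₃ x) {x | 0 < p₃ x})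
    (hI₁ : ∫ x in {x | 0 < p₁ x}, (p₁' x) ^ 2 / p₁ x ≤ I)
    (hI₂ : ∫ x in {x | 0 < p₂ x}, (p₂' x) ^ 2 / p₂ x ≤ I)
    (hI₃ : ∫ x in {x | 0 < p₃ x}, (p₃' x) ^ 2 / p₃ x ≤ I)
    (r r' p p'' : ℝ → ℝ)
    (hr : ∀ x, r x = ∫ z, p₂ (x - z) * p₃ z)
    (hr' : ∀ x, r' x = ∫ z, p₂' (x - z) * p₃ z)
    (hp : ∀ x, p x = ∫ y, p₁ (x - y) * r y)
    (hp'' : ∀ x, p'' x = ∫ y, p₁' (x - y) * r' y) :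
    ∀ x, |p'' x| ≤ I ^ ((5 : ℝ) / 4) * Real.sqrt (p x) :=
  convolution_three_second_deriv_bound_general p₁ p₂ p₃ p₁' p₂' p₃' I hnn₁ hint₁ hnn₂ hint₂ hnn₃
    hint₃ h1₃ hFTC₃ hconv₁ hconv₂ hconv₃ hI₁fin hI₂fin hI₃fin hI₁ hI₂ hI₃ r r' p p'' hr hr' hp hp''
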